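/- arXiv:1610.01297 — 2 statements merged into one kernel-verified Lean document; each statement's English description precedes it below -/
import Mathlib

section
/- Let M_O, C_O ∈ ℝ^{6×6}, M, C ∈ ℝ^{6N×6N}, and G ∈ ℝ^{6N×6} be time-dependent (differentiable) matrices such that Ṁ_O − 2C_O and Ṁ − 2C are skew-symmetric and M is symmetric. Define M̃ = M_O + GᵀMG and C̃ = C_O + GᵀCG + GᵀMĠ. Then the matrix dM̃/dt − 2C̃ is skew-symmetric. -/
open Matrix

/-!
`M̃` is differentiated entrywise by the product rule. For the skew-symmetry, symmetry of `M`
gives `(ĠᵀMG)ᵀ = GᵀMĠ`, so with `A = ĠᵀMG`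
`dM̃/dt − 2C̃ = (Ṁ_O − 2C_O) + Gᵀ(Ṁ − 2C)G + (A − Aᵀ)`,
a sum of a skew matrix, a congruence transform of a skew matrix and a matrix of the form `A − Aᵀ`.
-/

namespace Matrix

section EntrywiseDeriv

variable {𝕜 : Type*} [NontriviallyNormedField 𝕜] {l m n : Type*}

def HasEntrywiseDerivAt (A : 𝕜 → Matrix m n 𝕜) (A' : Matrix m n 𝕜) (t : 𝕜) : Prop :=
  ∀ i j, HasDerivAt (fun s => A s i j) (A' i j) t

namespace HasEntrywiseDerivAt

variable {A B : 𝕜 → Matrix m n 𝕜} {A' B' : Matrix m n 𝕜} {t : 𝕜}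

theorem add (hA : HasEntrywiseDerivAt A A' t) (hB : HasEntrywiseDerivAt B B' t) :
    HasEntrywiseDerivAt (fun s => A s + B s) (A' + B') t :=
  fun i j => (hA i j).add (hB i j)

theorem transpose (hA : HasEntrywiseDerivAt A A' t) :
    HasEntrywiseDerivAt (fun s => (A s)ᵀ) A'ᵀ t :=
  fun i j => hA j i

theorem mul [Fintype n] {B : 𝕜 → Matrix n l 𝕜} {B' : Matrix n l 𝕜}
    (hA : HasEntrywiseDerivAt A A' t) (hB : HasEntrywiseDerivAt B B' t) :
    HasEntrywiseDerivAt (fun s => A s * B s) (A' * B t + A t * B') t := by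
  intro i j
  simp only [add_apply, mul_apply, ← Finset.sum_add_distrib]
  exact HasDerivAt.fun_sum fun k _ => (hA i k).mul (hB k j)

end HasEntrywiseDerivAt

end EntrywiseDeriv

section Skew

variable {R : Type*} [CommRing R] {m n : Type*} [Fintype m]

theorem transpose_sub_transpose_self (A : Matrix n n R) : (A - Aᵀ)ᵀ = -(A - Aᵀ) := by
  rw [transpose_sub, transpose_transpose, neg_sub]

theorem transpose_congr_eq_neg {D : Matrix m m R} (hD : Dᵀ = -D) (G : Matrix m n R) :
    (Gᵀ * D * G)ᵀ = -(Gᵀ * D * G) := by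
  rw [transpose_mul, transpose_mul, transpose_transpose, hD, Matrix.neg_mul, Matrix.mul_neg,
    Matrix.mul_assoc]

theorem coupled_sub_two_smul_eq (C_O M_O' : Matrix n n R) (M C M' : Matrix m m R)
    (G G' : Matrix m n R) (hM : M.IsSymm) :
    (M_O' + G'ᵀ * M * G + Gᵀ * M' * G + Gᵀ * M * G') - 2 • (C_O + Gᵀ * C * G + Gᵀ * M * G') =
      (M_O' - 2 • C_O) + Gᵀ * (M' - 2 • C) * G + (G'ᵀ * M * G - (G'ᵀ * M * G)ᵀ) := by
  have hA : (G'ᵀ * M * G)ᵀ = Gᵀ * M * G' := by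
    rw [transpose_mul, transpose_mul, transpose_transpose, hM.eq, Matrix.mul_assoc]
  rw [hA, Matrix.mul_sub, Matrix.sub_mul, Matrix.mul_smul, Matrix.smul_mul]
  abel

theorem transpose_coupled_sub_two_smul_eq_neg (C_O M_O' : Matrix n n R)
    (M C M' : Matrix m m R) (G G' : Matrix m n R) (hM : M.IsSymm)
    (hO : (M_O' - 2 • C_O)ᵀ = -(M_O' - 2 • C_O)) (hMC : (M' - 2 • C)ᵀ = -(M' - 2 • C)) :
    ((M_O' + G'ᵀ * M * G + Gᵀ * M' * G + Gᵀ * M * G') - 2 • (C_O + Gᵀ * C * G + Gᵀ * M * G'))ᵀ =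
      -((M_O' + G'ᵀ * M * G + Gᵀ * M' * G + Gᵀ * M * G')
        - 2 • (C_O + Gᵀ * C * G + Gᵀ * M * G')) := by
  rw [coupled_sub_two_smul_eq _ _ _ _ _ _ _ hM, transpose_add, transpose_add, hO,
    transpose_congr_eq_neg hMC, transpose_sub_transpose_self, neg_add, neg_add]

end Skew

end Matrix

/-- skew-symmetry of `dM̃/dt − 2C̃` for the coupled dynamics, where
`M̃ = M_O + GᵀMG` and `C̃ = C_O + GᵀCG + GᵀMĠ`. -/
theorem coupled_skew_symmetry (N : ℕ)
    (M_O C_O M_O' : ℝ → Matrix (Fin 6) (Fin 6) ℝ)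
    (M C M' : ℝ → Matrix (Fin N × Fin 6) (Fin N × Fin 6) ℝ)
    (G G' : ℝ → Matrix (Fin N × Fin 6) (Fin 6) ℝ)
    (hM_O' : ∀ t i j, HasDerivAt (fun s => M_O s i j) (M_O' t i j) t)
    (hM' : ∀ t i j, HasDerivAt (fun s => M s i j) (M' t i j) t)
    (hG' : ∀ t i j, HasDerivAt (fun s => G s i j) (G' t i j) t)
    (hMsym : ∀ t, (M t).IsSymm)
    (hskewO : ∀ t, (M_O' t - 2 • C_O t)ᵀ = -(M_O' t - 2 • C_O t))
    (hskewM : ∀ t, (M' t - 2 • C t)ᵀ = -(M' t - 2 • C t)) :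
    ∀ t,
      (∀ i j, HasDerivAt (fun s => (M_O s + (G s)ᵀ * M s * G s) i j)
        ((M_O' t + (G' t)ᵀ * M t * G t + (G t)ᵀ * M' t * G t
          + (G t)ᵀ * M t * G' t) i j) t) ∧
      ((M_O' t + (G' t)ᵀ * M t * G t + (G t)ᵀ * M' t * G t + (G t)ᵀ * M t * G' t)
          - 2 • (C_O t + (G t)ᵀ * C t * G t + (G t)ᵀ * M t * G' t))ᵀ =
        -((M_O' t + (G' t)ᵀ * M t * G t + (G t)ᵀ * M' t * G t + (G t)ᵀ * M t * G' t)
          - 2 • (C_O t + (G t)ᵀ * C t * G t + (G t)ᵀ * M t * G' t)) := by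
  intro t
  have hG : HasEntrywiseDerivAt G (G' t) t := hG' t
  have hM_O : HasEntrywiseDerivAt M_O (M_O' t) t := hM_O' t
  have hderiv : HasEntrywiseDerivAt (fun s => M_O s + (G s)ᵀ * M s * G s)
      (M_O' t + (((G' t)ᵀ * M t + (G t)ᵀ * M' t) * G t + (G t)ᵀ * M t * G' t)) t :=
    hM_O.add ((hG.transpose.mul (hM' t)).mul hG)
  rw [Matrix.add_mul, ← add_assoc, ← add_assoc] at hderiv
  exact ⟨hderiv, transpose_coupled_sub_two_smul_eq_neg _ _ _ _ _ _ _ (hMsym t) (hskewO t)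
    (hskewM t)⟩
end

section
/- Barbalat's lemma: if f : ℝ≥0 → ℝ is differentiable, lim_{t→∞} f(t) exists and is finite, and f' is uniformly continuous on ℝ≥0, then f'(t) → 0 as t → ∞. -/
open Filter

/-- Auxiliary: if `f'` is bounded below by `c` on `[t, t+h]` then
`f (t+h) - f t ≥ c * h`. -/
lemma barbalat_aux (f f' : ℝ → ℝ)
    (hf : ∀ t ∈ Set.Ici (0 : ℝ), HasDerivWithinAt f (f' t) (Set.Ici 0) t)
    (t h c : ℝ) (ht : 0 ≤ t) (hh : 0 < h)
    (hlow : ∀ x ∈ Set.Icc t (t + h), c ≤ f' x) :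
    c * h ≤ f (t + h) - f t := by
  have hsub : Set.Icc t (t + h) ⊆ Set.Ici (0 : ℝ) := fun x hx => le_trans ht hx.1
  have hfc : ContinuousOn f (Set.Icc t (t + h)) :=
    fun x hx => ((hf x (hsub hx)).continuousWithinAt).mono hsub
  set g : ℝ → ℝ := fun x => f x - c * x with hg
  have hgmono : MonotoneOn g (Set.Icc t (t + h)) := by
    apply monotoneOn_of_deriv_nonneg (convex_Icc _ _)
    · exact hfc.sub (continuousOn_const.mul continuousOn_id)
    · intro x hx
      rw [interior_Icc] at hx
      have hx0 : 0 < x := lt_of_le_of_lt ht hx.1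
      have hdf : HasDerivAt f (f' x) x :=
        (hf x (le_of_lt hx0)).hasDerivAt (Ici_mem_nhds hx0)
      exact ((hdf.sub ((hasDerivAt_id x).const_mul c)).differentiableAt).differentiableWithinAt
    · intro x hx
      rw [interior_Icc] at hx
      have hx0 : 0 < x := lt_of_le_of_lt ht hx.1
      have hdf : HasDerivAt f (f' x) x :=
        (hf x (le_of_lt hx0)).hasDerivAt (Ici_mem_nhds hx0)
      have hdg : HasDerivAt g (f' x - c * 1) x := hdf.sub ((hasDerivAt_id x).const_mul c)
      rw [hdg.deriv]
      have := hlow x ⟨le_of_lt hx.1, le_of_lt hx.2⟩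
      linarith
  have := hgmono (Set.left_mem_Icc.mpr (by linarith)) (Set.right_mem_Icc.mpr (by linarith))
    (by linarith)
  simp only [hg] at this
  nlinarith

/-- Barbalat's lemma: if `f` is differentiable on `[0,∞)`, has a
finite limit at infinity, and `f'` is uniformly continuous on `[0,∞)`, then
`f'(t) → 0` as `t → ∞`. -/
theorem barbalat (f f' : ℝ → ℝ)
    (hf : ∀ t ∈ Set.Ici (0 : ℝ), HasDerivWithinAt f (f' t) (Set.Ici 0) t)
    (hlim : ∃ L : ℝ, Tendsto f atTop (nhds L))
    (huc : UniformContinuousOn f' (Set.Ici 0)) :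
    Tendsto f' atTop (nhds 0) := by
  obtain ⟨L, hL⟩ := hlim
  rw [Metric.tendsto_atTop]
  by_contra hcon
  push_neg at hcon
  obtain ⟨ε, hε, hbad⟩ := hcon
  obtain ⟨δ, hδ, hδ'⟩ := Metric.uniformContinuousOn_iff.mp huc (ε / 2) (by linarith)
  set h : ℝ := min (δ / 2) 1 with hh
  have hhpos : 0 < h := lt_min (by linarith) one_pos
  have hhδ : h < δ := lt_of_le_of_lt (min_le_left _ _) (by linarith)
  set η : ℝ := ε / 2 * h with hη
  have hηpos : 0 < η := by positivity
  obtain ⟨N, hN⟩ := Metric.tendsto_atTop.mp hL (η / 2) (by linarith)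
  obtain ⟨t, ht, htbad⟩ := hbad (max N 0)
  have ht0 : 0 ≤ t := le_trans (le_max_right _ _) ht
  have htN : N ≤ t := le_trans (le_max_left _ _) ht
  rw [Real.dist_eq, sub_zero] at htbad
  -- nearby values of f' are within ε/2 of f' t
  have hnear : ∀ x ∈ Set.Icc t (t + h), |f' x - f' t| < ε / 2 := by
    intro x hx
    have hx0 : (0 : ℝ) ≤ x := le_trans ht0 hx.1
    apply hδ' x hx0 t ht0
    rw [Real.dist_eq, abs_of_nonneg (by linarith [hx.1])]
    linarith [hx.2]
  -- distance bound on f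
  have hfd : |f (t + h) - f t| < η := by
    have h1 := hN t htN
    have h2 := hN (t + h) (by linarith)
    rw [Real.dist_eq] at h1 h2
    rw [abs_sub_lt_iff] at h1 h2 ⊢
    constructor <;> linarith [h1.1, h1.2, h2.1, h2.2]
  rw [abs_sub_lt_iff] at hfd
  rcases le_or_gt ε (f' t) with hsign | hsign
  · have hkey : ε / 2 * h ≤ f (t + h) - f t := by
      apply barbalat_aux f f' hf t h (ε / 2) ht0 hhpos
      intro x hx
      have := hnear x hx
      rw [abs_sub_lt_iff] at this
      linarith [this.2]
    linarith [hfd.1]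
  · have hneg : f' t ≤ -ε := by
      rcases abs_cases (f' t) with hc | hc
      · linarith [hc.1]
      · linarith [hc.1]
    have hkey : ε / 2 * h ≤ (-f) (t + h) - (-f) t := by
      apply barbalat_aux (-f) (fun x => -(f' x)) (fun x hx => (hf x hx).neg) t h (ε / 2)
        ht0 hhpos
      intro x hx
      have := hnear x hx
      rw [abs_sub_lt_iff] at this
      linarith [this.1]
    simp only [Pi.neg_apply] at hkey
    linarith [hfd.2]
end
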